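/- arXiv:1305.6875 — 4 statements merged into one kernel-verified Lean document; each statement's English description precedes it below -/
import Mathlib

section
/- Let E, B : ℝ × ℝ³ → ℝ³ be smooth vector fields on all of space-time satisfying Faraday's law: curl E + ∂_t B = 0 and div B = 0 everywhere. Then there exist a smooth vector field A : ℝ × ℝ³ → ℝ³ and a smooth scalar field φ : ℝ × ℝ³ → ℝ such that B = curl A and E = −∇φ − ∂_t A. (Converse direction of the paper's Theorem on the Faraday 2-form: on the simply connected space ℝ⁴, the closed Faraday 2-form F = E∧dt + B is exact, F = dA.) -/
open scoped BigOperators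

noncomputable section

/-- Points of space-time: time paired with a spatial point. -/
abbrev SpaceTime : Type := ℝ × (Fin 3 → ℝ)

/-- Spatial partial derivative in coordinate direction `j`. -/
def pd (j : Fin 3) (f : (Fin 3 → ℝ) → ℝ) (x : Fin 3 → ℝ) : ℝ :=
  fderiv ℝ f x (Pi.single j 1)

/-- Spatial divergence of a time-dependent vector field. -/
def div3 (F : SpaceTime → (Fin 3 → ℝ)) (t : ℝ) (x : Fin 3 → ℝ) : ℝ :=
  ∑ j : Fin 3, pd j (fun y => F (t, y) j) x

/-- `j`-th component of the spatial curl of a time-dependent vector field. -/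
def curl3 (F : SpaceTime → (Fin 3 → ℝ)) (t : ℝ) (x : Fin 3 → ℝ) (j : Fin 3) : ℝ :=
  pd (j + 1) (fun y => F (t, y) (j + 2)) x - pd (j + 2) (fun y => F (t, y) (j + 1)) x

/-- `j`-th component of the spatial gradient of a time-dependent scalar field. -/
def grad3 (f : SpaceTime → ℝ) (t : ℝ) (x : Fin 3 → ℝ) (j : Fin 3) : ℝ :=
  pd j (fun y => f (t, y)) x

/-- Time derivative of a time-dependent scalar field. -/
def dt1 (f : SpaceTime → ℝ) (t : ℝ) (x : Fin 3 → ℝ) : ℝ :=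
  deriv (fun s => f (s, x)) t

/-- Second time derivative of a time-dependent scalar field. -/
def dt2 (f : SpaceTime → ℝ) (t : ℝ) (x : Fin 3 → ℝ) : ℝ :=
  deriv (fun s => dt1 f s x) t

/-- Spatial Laplacian of a time-dependent scalar field. -/
def lap3 (f : SpaceTime → ℝ) (t : ℝ) (x : Fin 3 → ℝ) : ℝ :=
  ∑ j : Fin 3, pd j (fun y => pd j (fun z => f (t, z)) y) x

/-!
With time as a parameter, both potentials come from the Poincaré lemma on `ℝ³`, made explicit by
integrating along coordinate axes. Since `div B = 0`, the field
`A = (∫₀^z B_y, ∫₀^x B_z(·, ·, 0) - ∫₀^z B_x, 0)` satisfies `curl A = B`. Faraday's law then gives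
`curl V = curl E + ∂ₜ(curl A) = curl E + ∂ₜB = 0` for `V = E + ∂ₜA`, so `V = ∇ψ` with
`ψ = ∫₀^z V_z + ∫₀^y V_y(·, ·, 0) + ∫₀^x V_x(·, 0, 0)`, and `φ = -ψ` works.
The primitives are smooth: after rescaling the interval of integration to `[-1, 0]` this is
differentiation under the integral sign.
-/

open scoped ContDiff
open Function (uncurry)

section ParametricIntegral

variable {H G : Type*} [NormedAddCommGroup H] [NormedSpace ℝ H]
  [NormedAddCommGroup G] [NormedSpace ℝ G] {f : H → ℝ → G}

theorem hasFDerivAt_partial_of_contDiff (hf : ContDiff ℝ 1 (uncurry f)) (x : H) (t : ℝ) :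
    HasFDerivAt (fun y => f y t)
      ((fderiv ℝ (uncurry f) (x, t)).comp (ContinuousLinearMap.inl ℝ H ℝ)) x := by
  have h := (hf.differentiable one_ne_zero (x, t)).hasFDerivAt
  exact h.comp (f := fun y => (y, t)) x (hasFDerivAt_prodMk_left x t)

variable [FiniteDimensional ℝ H]

theorem hasFDerivAt_intervalIntegral_of_contDiff (hf : ContDiff ℝ 1 (uncurry f))
    (a b : ℝ) (x₀ : H) :
    HasFDerivAt (fun x => ∫ t in a..b, f x t) (∫ t in a..b, fderiv ℝ (fun x => f x t) x₀) x₀ := by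
  set f' : H × ℝ → H →L[ℝ] G := fun p =>
    (fderiv ℝ (uncurry f) p).comp (ContinuousLinearMap.inl ℝ H ℝ)
  have hf' : Continuous f' := (hf.continuous_fderiv one_ne_zero).clm_comp continuous_const
  obtain ⟨C, hC⟩ := ((isCompact_closedBall x₀ 1).prod isCompact_uIcc).exists_bound_of_continuousOn
    hf'.continuousOn (f := f')
  have hslice : ∀ x, Continuous (f x) := fun x => hf.continuous.comp (Continuous.prodMk_right x)
  simp only [fun t => (hasFDerivAt_partial_of_contDiff hf x₀ t).fderiv]
  exact intervalIntegral.hasFDerivAt_integral_of_dominated_of_fderiv_le (bound := fun _ => C)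
    (F' := fun x t => f' (x, t)) (Metric.closedBall_mem_nhds x₀ one_pos)
    (.of_forall fun x => (hslice x).aestronglyMeasurable) ((hslice x₀).intervalIntegrable a b)
    (hf'.comp (Continuous.prodMk_right x₀)).aestronglyMeasurable
    (.of_forall fun t ht x hx => hC (x, t) ⟨hx, Set.uIoc_subset_uIcc ht⟩)
    intervalIntegrable_const
    (.of_forall fun t _ x _ => hasFDerivAt_partial_of_contDiff hf x t)

theorem contDiff_intervalIntegral_of_contDiff {n : ℕ∞} (hf : ContDiff ℝ n (uncurry f))
    (a b : ℝ) : ContDiff ℝ n (fun x => ∫ t in a..b, f x t) := by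
  induction n using ENat.nat_induction generalizing f with
  | zero =>
    exact contDiff_zero.2 (intervalIntegral.continuous_parametric_intervalIntegral_of_continuous'
      (contDiff_zero.1 hf) a b)
  | succ n ih =>
    have hf' : ContDiff ℝ (n + 1) (uncurry f) := by exact_mod_cast hf
    have hderiv := hasFDerivAt_intervalIntegral_of_contDiff hf'.one_of_succ a b
    push_cast
    refine contDiff_succ_iff_fderiv_apply.2
      ⟨fun x => (hderiv x).differentiableAt, by simp, fun v => ?_⟩
    have hpartial := hasFDerivAt_partial_of_contDiff hf'.one_of_succ
    have hfderiv_apply : (fun x => fderiv ℝ (fun x => ∫ t in a..b, f x t) x v) =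
        fun x => ∫ t in a..b, fderiv ℝ (uncurry f) (x, t) (v, 0) := by
      funext x
      simp only [(hderiv x).fderiv, (hpartial x _).fderiv]
      exact ContinuousLinearMap.intervalIntegral_apply
        ((((hf'.continuous_fderiv (by simp)).clm_comp continuous_const).comp
          (Continuous.prodMk_right x)).intervalIntegrable a b) _
    rw [hfderiv_apply]
    exact ih (f := fun x t => fderiv ℝ (uncurry f) (x, t) (v, 0))
      ((hf'.fderiv_right le_rfl).clm_apply contDiff_const)
  | top ih => exact contDiff_infty.2 fun n => ih n (hf.of_le (by exact_mod_cast le_top))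

end ParametricIntegral

section DirDeriv

variable {E G : Type*} [NormedAddCommGroup E] [NormedSpace ℝ E]
  [NormedAddCommGroup G] [NormedSpace ℝ G]

def dirDeriv (v : E) (f : E → G) : E → G := fun p => fderiv ℝ f p v

theorem dirDeriv_add {f g : E → G} (hf : Differentiable ℝ f) (hg : Differentiable ℝ g) (v : E) :
    dirDeriv v (fun p => f p + g p) = fun p => dirDeriv v f p + dirDeriv v g p :=
  funext fun p => by simp [dirDeriv, fderiv_fun_add (hf p) (hg p)]

theorem dirDeriv_sub {f g : E → G} (hf : Differentiable ℝ f) (hg : Differentiable ℝ g) (v : E) :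
    dirDeriv v (fun p => f p - g p) = fun p => dirDeriv v f p - dirDeriv v g p :=
  funext fun p => by simp [dirDeriv, fderiv_fun_sub (hf p) (hg p)]

theorem dirDeriv_neg (f : E → G) (v : E) :
    dirDeriv v (fun p => -f p) = fun p => -dirDeriv v f p :=
  funext fun p => by simp [dirDeriv, fderiv_fun_neg]

theorem dirDeriv_zero (f : E → G) : dirDeriv 0 f = 0 :=
  funext fun p => by simp [dirDeriv]

theorem dirDeriv_const (c : G) (v : E) : dirDeriv v (fun _ => c) = 0 :=
  funext fun p => by simp [dirDeriv]

theorem dirDeriv_comp_clm {E' : Type*} [NormedAddCommGroup E'] [NormedSpace ℝ E'] {f : E' → G}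
    (hf : Differentiable ℝ f) (L : E →L[ℝ] E') (v : E) :
    dirDeriv v (f ∘ L) = dirDeriv (L v) f ∘ L :=
  funext fun p => by simp [dirDeriv, fderiv_comp p (hf (L p)) L.differentiableAt, L.fderiv]

theorem contDiff_dirDeriv {m n : WithTop ℕ∞} {f : E → G} (hf : ContDiff ℝ m f) (hmn : n + 1 ≤ m)
    (v : E) : ContDiff ℝ n (dirDeriv v f) :=
  (hf.fderiv_right hmn).clm_apply contDiff_const

theorem dirDeriv_comm {f : E → G} (hf : ContDiff ℝ 2 f) (v w : E) :
    dirDeriv v (dirDeriv w f) = dirDeriv w (dirDeriv v f) := by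
  funext p
  have hdiff : DifferentiableAt ℝ (fderiv ℝ f) p :=
    (hf.fderiv_right (m := 1) (by norm_num)).differentiable one_ne_zero p
  have hsymm := (hf.contDiffAt (x := p)).isSymmSndFDerivAt (by simp) v w
  change fderiv ℝ (fun q => fderiv ℝ f q w) p v = fderiv ℝ (fun q => fderiv ℝ f q v) p w
  simpa [fderiv_clm_apply hdiff (differentiableAt_const _)] using hsymm

theorem fderiv_apply_eq_of_forall_add_smul {f g : E → G} {p v : E} (hf : DifferentiableAt ℝ f p)
    (hg : DifferentiableAt ℝ g p) (hfg : ∀ t : ℝ, f (p + t • v) = g (p + t • v)) :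
    fderiv ℝ f p v = fderiv ℝ g p v := by
  rw [← hf.lineDeriv_eq_fderiv, ← hg.lineDeriv_eq_fderiv, lineDeriv, lineDeriv]
  simp only [hfg]

end DirDeriv

section LinePrimitive

variable {E G : Type*} [NormedAddCommGroup E] [NormedSpace ℝ E]
  [NormedAddCommGroup G] [NormedSpace ℝ G] (ℓ : E →L[ℝ] ℝ) (w : E)

def linePrimitive (f : E → G) (p : E) : G := ∫ s in -(ℓ p)..0, f (p + s • w)

def projAlong : E →L[ℝ] E := ContinuousLinearMap.id ℝ E - ℓ.smulRight w

variable {ℓ w}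

theorem projAlong_apply (v : E) : projAlong ℓ w v = v - ℓ v • w := rfl

theorem projAlong_apply_of_apply_eq_zero {v : E} (hv : ℓ v = 0) : projAlong ℓ w v = v := by
  simp [projAlong_apply, hv]

theorem projAlong_self (hw : ℓ w = 1) : projAlong ℓ w w = 0 := by
  simp [projAlong_apply, hw]

theorem dirDeriv_comp_projAlong_of_apply_eq_zero {f : E → G} (hf : Differentiable ℝ f) {v : E}
    (hv : ℓ v = 0) : dirDeriv v (f ∘ projAlong ℓ w) = dirDeriv v f ∘ projAlong ℓ w := by
  rw [dirDeriv_comp_clm hf, projAlong_apply_of_apply_eq_zero hv]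

theorem dirDeriv_comp_projAlong_self {f : E → G} (hf : Differentiable ℝ f) (hw : ℓ w = 1) :
    dirDeriv w (f ∘ projAlong ℓ w) = 0 := by
  rw [dirDeriv_comp_clm hf, projAlong_self hw, dirDeriv_zero]
  rfl

theorem linePrimitive_eq_smul_integral (f : E → G) (p : E) :
    linePrimitive ℓ w f p = ℓ p • ∫ x in (-1 : ℝ)..0, f (p + (ℓ p * x) • w) := by
  rw [intervalIntegral.smul_integral_comp_mul_left (fun s => f (p + s • w)), linePrimitive]
  simp

theorem linePrimitive_finsetSum {ι : Type*} (s : Finset ι) {f : ι → E → G}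
    (hf : ∀ i ∈ s, Continuous (f i)) (p : E) :
    linePrimitive ℓ w (fun q => ∑ i ∈ s, f i q) p = ∑ i ∈ s, linePrimitive ℓ w (f i) p :=
  intervalIntegral.integral_finsetSum fun i hi =>
    (show Continuous fun s : ℝ => f i (p + s • w) by have := hf i hi; fun_prop).intervalIntegrable
      _ _

theorem linePrimitive_zero : linePrimitive ℓ w (0 : E → G) = 0 :=
  funext fun p => by simp [linePrimitive]

theorem linePrimitive_dirDeriv_self [CompleteSpace G] {f : E → G} (hf : ContDiff ℝ 1 f) :
    linePrimitive ℓ w (dirDeriv w f) = f - f ∘ projAlong ℓ w := by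
  funext p
  have hderiv : ∀ s : ℝ, HasDerivAt (fun s : ℝ => f (p + s • w)) (dirDeriv w f (p + s • w)) s :=
    fun s => (hf.differentiable one_ne_zero _).hasFDerivAt.comp_hasDerivAt s
      (((hasDerivAt_id s).smul_const w).const_add p |>.congr_deriv (by simp))
  have hcont : Continuous fun s : ℝ => dirDeriv w f (p + s • w) := by
    have := hf.continuous_fderiv one_ne_zero
    unfold dirDeriv
    fun_prop
  rw [linePrimitive, intervalIntegral.integral_eq_sub_of_hasDerivAt (fun s _ => hderiv s)
    (hcont.intervalIntegrable _ _)]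
  simp [projAlong_apply, sub_eq_add_neg]

variable [FiniteDimensional ℝ E]

theorem contDiff_linePrimitive {n : ℕ∞} {f : E → G} (hf : ContDiff ℝ n f) :
    ContDiff ℝ n (linePrimitive ℓ w f) := by
  have hint : ContDiff ℝ n (uncurry fun p (x : ℝ) => f (p + (ℓ p * x) • w)) :=
    hf.comp (contDiff_fst.add (((ℓ.contDiff.comp contDiff_fst).mul contDiff_snd).smul
      contDiff_const))
  rw [funext (linePrimitive_eq_smul_integral f)]
  exact ℓ.contDiff.smul (contDiff_intervalIntegral_of_contDiff hint (-1) 0)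

theorem dirDeriv_linePrimitive_of_apply_eq_zero {f : E → G} (hf : ContDiff ℝ 1 f) {v : E}
    (hv : ℓ v = 0) : dirDeriv v (linePrimitive ℓ w f) = linePrimitive ℓ w (dirDeriv v f) := by
  funext p
  set F : E → G := fun q => ∫ s in -(ℓ p)..0, f (q + s • w)
  have hF : HasFDerivAt F (∫ s in -(ℓ p)..0, fderiv ℝ (fun q => f (q + s • w)) p) p :=
    hasFDerivAt_intervalIntegral_of_contDiff (f := fun q (s : ℝ) => f (q + s • w))
      (hf.comp (contDiff_fst.add (contDiff_snd.smul contDiff_const))) _ _ p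
  have hline : ∀ t : ℝ, linePrimitive ℓ w f (p + t • v) = F (p + t • v) := fun t => by
    simp [linePrimitive, F, hv]
  have hcont : Continuous fun s : ℝ => fderiv ℝ f (p + s • w) := by
    have := hf.continuous_fderiv one_ne_zero
    fun_prop
  calc dirDeriv v (linePrimitive ℓ w f) p = fderiv ℝ F p v :=
        fderiv_apply_eq_of_forall_add_smul
          ((contDiff_linePrimitive hf).differentiable one_ne_zero p) hF.differentiableAt hline
    _ = linePrimitive ℓ w (dirDeriv v f) p := by
        simp only [hF.fderiv, fderiv_comp_add_right]
        exact ContinuousLinearMap.intervalIntegral_apply (hcont.intervalIntegrable _ _) v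

theorem dirDeriv_linePrimitive_self [CompleteSpace G] {f : E → G} (hf : ContDiff ℝ 1 f)
    (hw : ℓ w = 1) : dirDeriv w (linePrimitive ℓ w f) = f := by
  funext p
  have hcont : Continuous fun s : ℝ => f (p + s • w) := by fun_prop
  have hline : (fun t : ℝ => linePrimitive ℓ w f (p + t • w)) =
      fun t => ∫ s in -(ℓ p)..t, f (p + s • w) := by
    funext t
    have hshift := intervalIntegral.integral_comp_add_right (a := -(ℓ p + t)) (b := 0)
      (fun s => f (p + s • w)) t
    rw [show -(ℓ p + t) + t = -ℓ p by ring, zero_add] at hshift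
    rw [linePrimitive, map_add, map_smul, hw, smul_eq_mul, mul_one, ← hshift]
    congr 1
    funext s
    congr 1
    module
  have hftc : HasDerivAt (fun t => ∫ s in -(ℓ p)..t, f (p + s • w)) (f p) 0 := by
    simpa using intervalIntegral.integral_hasDerivAt_right (b := 0) (hcont.intervalIntegrable _ _)
      hcont.aestronglyMeasurable.stronglyMeasurableAtFilter hcont.continuousAt
  rw [dirDeriv, ← ((contDiff_linePrimitive hf).differentiable one_ne_zero p).lineDeriv_eq_fderiv,
    lineDeriv, hline, hftc.deriv]

end LinePrimitive

section ExtendPotential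

variable {E G : Type*} [NormedAddCommGroup E] [NormedSpace ℝ E] [FiniteDimensional ℝ E]
  [NormedAddCommGroup G] [NormedSpace ℝ G] {ℓ : E →L[ℝ] ℝ} {w : E}

variable (ℓ w) in
def extendPotential (g ψ : E → G) : E → G :=
  fun p => linePrimitive ℓ w g p + (ψ ∘ projAlong ℓ w) p

theorem contDiff_extendPotential {n : ℕ∞} {g ψ : E → G} (hg : ContDiff ℝ n g)
    (hψ : ContDiff ℝ n ψ) : ContDiff ℝ n (extendPotential ℓ w g ψ) :=
  (contDiff_linePrimitive hg).add (hψ.comp (projAlong ℓ w).contDiff)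

theorem dirDeriv_extendPotential_self [CompleteSpace G] {g ψ : E → G} (hg : ContDiff ℝ 1 g)
    (hψ : Differentiable ℝ ψ) (hw : ℓ w = 1) : dirDeriv w (extendPotential ℓ w g ψ) = g := by
  unfold extendPotential
  rw [dirDeriv_add ((contDiff_linePrimitive hg).differentiable one_ne_zero)
    (hψ.comp (projAlong ℓ w).differentiable), dirDeriv_linePrimitive_self hg hw,
    dirDeriv_comp_projAlong_self hψ hw]
  simp

theorem dirDeriv_extendPotential_of_apply_eq_zero [CompleteSpace G] {g ψ h : E → G} {v : E}
    (hg : ContDiff ℝ 1 g) (hψ : Differentiable ℝ ψ) (hh : ContDiff ℝ 1 h) (hv : ℓ v = 0)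
    (hgh : dirDeriv v g = dirDeriv w h) (hψh : dirDeriv v ψ = h) :
    dirDeriv v (extendPotential ℓ w g ψ) = h := by
  unfold extendPotential
  rw [dirDeriv_add ((contDiff_linePrimitive hg).differentiable one_ne_zero)
    (hψ.comp (projAlong ℓ w).differentiable), dirDeriv_linePrimitive_of_apply_eq_zero hg hv, hgh,
    linePrimitive_dirDeriv_self hh, dirDeriv_comp_projAlong_of_apply_eq_zero hψ hv, hψh]
  simp

end ExtendPotential

namespace SpaceTime

def coord (j : Fin 3) : SpaceTime →L[ℝ] ℝ :=
  (ContinuousLinearMap.proj j).comp (ContinuousLinearMap.snd ℝ ℝ (Fin 3 → ℝ))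

def ex (j : Fin 3) : SpaceTime := (0, Pi.single j 1)

def et : SpaceTime := (1, 0)

theorem coord_ex_self (j : Fin 3) : coord j (ex j) = 1 := by
  simp [coord, ex]

theorem coord_ex_of_ne (i j : Fin 3) (h : i ≠ j := by decide) : coord j (ex i) = 0 := by
  simp [coord, ex, Ne.symm h]

def curl (F : SpaceTime → Fin 3 → ℝ) (p : SpaceTime) (j : Fin 3) : ℝ :=
  dirDeriv (ex (j + 1)) (fun q => F q (j + 2)) p - dirDeriv (ex (j + 2)) (fun q => F q (j + 1)) p

def divergence (F : SpaceTime → Fin 3 → ℝ) (p : SpaceTime) : ℝ :=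
  ∑ j, dirDeriv (ex j) (fun q => F q j) p

theorem pd_eq_dirDeriv {f : SpaceTime → ℝ} {t : ℝ} {x : Fin 3 → ℝ}
    (hf : DifferentiableAt ℝ f (t, x)) (j : Fin 3) :
    pd j (fun y => f (t, y)) x = dirDeriv (ex j) f (t, x) := by
  have h : HasFDerivAt (fun y => f (t, y))
      ((fderiv ℝ f (t, x)).comp (ContinuousLinearMap.inr ℝ ℝ (Fin 3 → ℝ))) x :=
    hf.hasFDerivAt.comp x (hasFDerivAt_prodMk_right t x)
  rw [pd, h.fderiv]
  rfl

theorem dt1_eq_dirDeriv {f : SpaceTime → ℝ} {t : ℝ} {x : Fin 3 → ℝ}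
    (hf : DifferentiableAt ℝ f (t, x)) : dt1 f t x = dirDeriv et f (t, x) := by
  have h : HasDerivAt (fun s => f (s, x)) (fderiv ℝ f (t, x) et) t :=
    hf.hasFDerivAt.comp_hasDerivAt t ((hasDerivAt_id t).prodMk (hasDerivAt_const t x))
  rw [dt1, h.deriv]
  rfl

theorem curl3_eq_curl {F : SpaceTime → Fin 3 → ℝ} (hF : Differentiable ℝ F) (t : ℝ)
    (x : Fin 3 → ℝ) (j : Fin 3) : curl3 F t x j = curl F (t, x) j := by
  rw [curl3, curl, pd_eq_dirDeriv ((differentiable_pi.1 hF _) _),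
    pd_eq_dirDeriv ((differentiable_pi.1 hF _) _)]

theorem div3_eq_divergence {F : SpaceTime → Fin 3 → ℝ} (hF : Differentiable ℝ F) (t : ℝ)
    (x : Fin 3 → ℝ) : div3 F t x = divergence F (t, x) := by
  simp only [div3, divergence, pd_eq_dirDeriv ((differentiable_pi.1 hF _) _)]

theorem curl_add {F G : SpaceTime → Fin 3 → ℝ} (hF : Differentiable ℝ F) (hG : Differentiable ℝ G)
    (p : SpaceTime) (j : Fin 3) : curl (F + G) p j = curl F p j + curl G p j := by
  simp only [curl, Pi.add_apply, dirDeriv_add (differentiable_pi.1 hF _) (differentiable_pi.1 hG _)]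
  ring

theorem curl_timeDeriv {A : SpaceTime → Fin 3 → ℝ} (hA : ContDiff ℝ 2 A) (p : SpaceTime)
    (j : Fin 3) :
    curl (fun q k => dirDeriv et (fun r => A r k) q) p j = dirDeriv et (fun q => curl A q j) p := by
  have hA' := contDiff_pi.1 hA
  have hdA : ∀ i k, Differentiable ℝ (dirDeriv (ex i) (fun r => A r k)) := fun i k =>
    (contDiff_dirDeriv (hA' k) (by norm_num) (ex i) (n := 1)).differentiable one_ne_zero
  simp only [curl, dirDeriv_sub (hdA _ _) (hdA _ _), dirDeriv_comm (hA' _)]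

-- With `ℓ = coord j` and `w = ex j`, `linePrimitive ℓ w f (t, x)` is `∫₀^{x j} f` along the
-- `j`-th axis and `projAlong ℓ w` sets the `j`-th coordinate to `0`.
def vectorPotential (B : SpaceTime → Fin 3 → ℝ) (p : SpaceTime) : Fin 3 → ℝ :=
  ![linePrimitive (coord 2) (ex 2) (fun q => B q 1) p,
    linePrimitive (coord 0) (ex 0) ((fun q => B q 2) ∘ projAlong (coord 2) (ex 2)) p -
      linePrimitive (coord 2) (ex 2) (fun q => B q 0) p,
    0]

theorem contDiff_vectorPotential {n : ℕ∞} {B : SpaceTime → Fin 3 → ℝ} (hB : ContDiff ℝ n B) :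
    ContDiff ℝ n (vectorPotential B) := by
  have hB' := contDiff_pi.1 hB
  refine contDiff_pi.2 fun i => ?_
  fin_cases i
  · exact contDiff_linePrimitive (hB' 1)
  · exact (contDiff_linePrimitive ((hB' 2).comp (projAlong _ _).contDiff)).sub
      (contDiff_linePrimitive (hB' 0))
  · exact contDiff_const

theorem linePrimitive_eq_of_divergence_eq_zero {B : SpaceTime → Fin 3 → ℝ} (hB : ContDiff ℝ 1 B)
    (hdiv : ∀ p, divergence B p = 0) (p : SpaceTime) :
    linePrimitive (coord 2) (ex 2) (dirDeriv (ex 0) fun q => B q 0) p +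
        linePrimitive (coord 2) (ex 2) (dirDeriv (ex 1) fun q => B q 1) p =
      B (projAlong (coord 2) (ex 2) p) 2 - B p 2 := by
  have hB' := contDiff_pi.1 hB
  have hsum : ∑ k, linePrimitive (coord 2) (ex 2) (dirDeriv (ex k) fun q => B q k) p = 0 := by
    rw [← linePrimitive_finsetSum _ fun k _ =>
        (contDiff_dirDeriv (hB' k) le_rfl (ex k) (n := 0)).continuous,
      show (fun q => ∑ k, dirDeriv (ex k) (fun q => B q k) q) = 0 from funext hdiv,
      linePrimitive_zero]
    rfl
  have hftc := congrFun (linePrimitive_dirDeriv_self (hB' 2) (ℓ := coord 2) (w := ex 2)) p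
  rw [Fin.sum_univ_three] at hsum
  simp only [Pi.sub_apply, Function.comp_apply] at hftc
  linarith

theorem curl_vectorPotential {B : SpaceTime → Fin 3 → ℝ} (hB : ContDiff ℝ 1 B)
    (hdiv : ∀ p, divergence B p = 0) (p : SpaceTime) (j : Fin 3) :
    curl (vectorPotential B) p j = B p j := by
  have hB' := contDiff_pi.1 hB
  have hfrozen : ContDiff ℝ 1 ((fun q => B q 2) ∘ projAlong (coord 2) (ex 2)) :=
    (hB' 2).comp (projAlong _ _).contDiff
  have hA₁ := dirDeriv_sub
    ((contDiff_linePrimitive (ℓ := coord 0) (w := ex 0) hfrozen).differentiable one_ne_zero)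
    ((contDiff_linePrimitive (ℓ := coord 2) (w := ex 2) (hB' 0)).differentiable one_ne_zero)
  fin_cases j
  · change dirDeriv (ex 1) (fun _ => 0) p - dirDeriv (ex 2) (fun q =>
      linePrimitive (coord 0) (ex 0) ((fun q => B q 2) ∘ projAlong (coord 2) (ex 2)) q -
        linePrimitive (coord 2) (ex 2) (fun q => B q 0) q) p = B p 0
    rw [hA₁, dirDeriv_linePrimitive_of_apply_eq_zero hfrozen (coord_ex_of_ne _ _),
      dirDeriv_comp_projAlong_self ((hB' 2).differentiable one_ne_zero) (coord_ex_self 2),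
      linePrimitive_zero, dirDeriv_linePrimitive_self (hB' 0) (coord_ex_self 2), dirDeriv_const]
    simp
  · change dirDeriv (ex 2) (linePrimitive (coord 2) (ex 2) (fun q => B q 1)) p -
      dirDeriv (ex 0) (fun _ => 0) p = B p 1
    rw [dirDeriv_linePrimitive_self (hB' 1) (coord_ex_self 2), dirDeriv_const]
    simp
  · change dirDeriv (ex 0) (fun q =>
      linePrimitive (coord 0) (ex 0) ((fun q => B q 2) ∘ projAlong (coord 2) (ex 2)) q -
        linePrimitive (coord 2) (ex 2) (fun q => B q 0) q) p -
      dirDeriv (ex 1) (linePrimitive (coord 2) (ex 2) (fun q => B q 1)) p = B p 2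
    rw [hA₁, dirDeriv_linePrimitive_self hfrozen (coord_ex_self 0),
      dirDeriv_linePrimitive_of_apply_eq_zero (hB' 0) (coord_ex_of_ne _ _),
      dirDeriv_linePrimitive_of_apply_eq_zero (hB' 1) (coord_ex_of_ne _ _)]
    have := linePrimitive_eq_of_divergence_eq_zero hB hdiv p
    simp only [Function.comp_apply]
    linarith

def scalarPotential (V : SpaceTime → Fin 3 → ℝ) : SpaceTime → ℝ :=
  extendPotential (coord 2) (ex 2) (fun q => V q 2) <|
    extendPotential (coord 1) (ex 1) (fun q => V q 1) <|
      extendPotential (coord 0) (ex 0) (fun q => V q 0) 0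

theorem contDiff_scalarPotential {n : ℕ∞} {V : SpaceTime → Fin 3 → ℝ} (hV : ContDiff ℝ n V) :
    ContDiff ℝ n (scalarPotential V) := by
  have hV' := contDiff_pi.1 hV
  exact contDiff_extendPotential (hV' 2) <| contDiff_extendPotential (hV' 1) <|
    contDiff_extendPotential (hV' 0) contDiff_const

theorem dirDeriv_scalarPotential {V : SpaceTime → Fin 3 → ℝ} (hV : ContDiff ℝ 1 V)
    (hcurl : ∀ p j, curl V p j = 0) (j : Fin 3) :
    dirDeriv (ex j) (scalarPotential V) = fun p => V p j := by
  have hV' := contDiff_pi.1 hV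
  set ψ₀ := extendPotential (coord 0) (ex 0) (fun q => V q 0) 0
  set ψ₁ := extendPotential (coord 1) (ex 1) (fun q => V q 1) ψ₀
  have hψ₀ : ContDiff ℝ 1 ψ₀ := contDiff_extendPotential (hV' 0) contDiff_const
  have hψ₁ : ContDiff ℝ 1 ψ₁ := contDiff_extendPotential (hV' 1) hψ₀
  have h₀₀ : dirDeriv (ex 0) ψ₀ = fun q => V q 0 :=
    dirDeriv_extendPotential_self (hV' 0) (differentiable_const 0) (coord_ex_self 0)
  have h₁₁ : dirDeriv (ex 1) ψ₁ = fun q => V q 1 :=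
    dirDeriv_extendPotential_self (hV' 1) (hψ₀.differentiable one_ne_zero) (coord_ex_self 1)
  have h₁₀ : dirDeriv (ex 0) ψ₁ = fun q => V q 0 :=
    dirDeriv_extendPotential_of_apply_eq_zero (hV' 1) (hψ₀.differentiable one_ne_zero) (hV' 0)
      (coord_ex_of_ne 0 1) (funext fun p => sub_eq_zero.1 (hcurl p 2)) h₀₀
  fin_cases j
  · exact dirDeriv_extendPotential_of_apply_eq_zero (hV' 2) (hψ₁.differentiable one_ne_zero)
      (hV' 0) (coord_ex_of_ne 0 2) (funext fun p => (sub_eq_zero.1 (hcurl p 1)).symm) h₁₀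
  · exact dirDeriv_extendPotential_of_apply_eq_zero (hV' 2) (hψ₁.differentiable one_ne_zero)
      (hV' 1) (coord_ex_of_ne 1 2) (funext fun p => sub_eq_zero.1 (hcurl p 0)) h₁₁
  · exact dirDeriv_extendPotential_self (hV' 2) (hψ₁.differentiable one_ne_zero) (coord_ex_self 2)

end SpaceTime

open SpaceTime

/-- smooth fields satisfying Faraday's law on all of space-time
admit a smooth vector potential `A` and scalar potential `φ` with
`B = curl A` and `E = -∇φ - ∂ₜA`. -/
theorem potential_of_faraday
    (E B : SpaceTime → (Fin 3 → ℝ))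
    (hE : ContDiff ℝ (⊤ : ℕ∞) E) (hB : ContDiff ℝ (⊤ : ℕ∞) B)
    (hFaraday : ∀ (t : ℝ) (x : Fin 3 → ℝ) (j : Fin 3),
      curl3 E t x j + dt1 (fun p => B p j) t x = 0)
    (hdivB : ∀ (t : ℝ) (x : Fin 3 → ℝ), div3 B t x = 0) :
    ∃ (A : SpaceTime → (Fin 3 → ℝ)) (φ : SpaceTime → ℝ),
      ContDiff ℝ (⊤ : ℕ∞) A ∧ ContDiff ℝ (⊤ : ℕ∞) φ ∧
      (∀ (t : ℝ) (x : Fin 3 → ℝ) (j : Fin 3), B (t, x) j = curl3 A t x j) ∧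
      (∀ (t : ℝ) (x : Fin 3 → ℝ) (j : Fin 3),
        E (t, x) j = -grad3 φ t x j - dt1 (fun p => A p j) t x) := by
  have hdiff : ∀ {F : SpaceTime → Fin 3 → ℝ}, ContDiff ℝ (⊤ : ℕ∞) F → Differentiable ℝ F :=
    fun hF => hF.differentiable (by simp)
  have hdiv : ∀ p, divergence B p = 0 := fun p => by
    simpa [div3_eq_divergence (hdiff hB)] using hdivB p.1 p.2
  have hfaraday : ∀ p j, curl E p j + dirDeriv et (fun q => B q j) p = 0 := fun p j => by
    simpa [curl3_eq_curl (hdiff hE), dt1_eq_dirDeriv (differentiable_pi.1 (hdiff hB) j _)]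
      using hFaraday p.1 p.2 j
  set A := vectorPotential B
  have hA : ContDiff ℝ (⊤ : ℕ∞) A := contDiff_vectorPotential hB
  have hcurlA : ∀ p j, curl A p j = B p j := curl_vectorPotential (hB.of_le (by simp)) hdiv
  have hdtA : ContDiff ℝ (⊤ : ℕ∞) fun q k => dirDeriv et (fun r => A r k) q :=
    contDiff_pi.2 fun k => contDiff_dirDeriv (contDiff_pi.1 hA k) (by simp) et
  set W := E + fun q k => dirDeriv et (fun r => A r k) q
  have hW : ContDiff ℝ (⊤ : ℕ∞) W := hE.add hdtA
  have hcurlW : ∀ p j, curl W p j = 0 := fun p j => by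
    rw [curl_add (hdiff hE) (hdiff hdtA), curl_timeDeriv (hA.of_le ENat.LEInfty.out),
      show (fun q => curl A q j) = fun q => B q j from funext (hcurlA · j)]
    exact hfaraday p j
  have hφ := dirDeriv_scalarPotential (hW.of_le (by simp)) hcurlW
  refine ⟨A, fun p => -scalarPotential W p, hA, (contDiff_scalarPotential hW).neg,
    fun t x j => ?_, fun t x j => ?_⟩
  · rw [curl3_eq_curl (hdiff hA), hcurlA]
  · rw [grad3, pd_eq_dirDeriv ((contDiff_scalarPotential hW).neg.differentiable (by simp) _),
      dt1_eq_dirDeriv (differentiable_pi.1 (hdiff hA) j _), dirDeriv_neg, hφ]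
    simp [W]
end
end

section
/- Let ε, μ, c > 0 satisfy εμc² = 1. Let A : ℝ × ℝ³ → ℝ³ and φ : ℝ × ℝ³ → ℝ be smooth fields satisfying the Lorenz gauge condition div A + c⁻² ∂_t φ = 0. Set E := −∇φ − ∂_t A, B := curl A, H := μ⁻¹ B, D := ε E, and suppose the Maxwell–Ampère equation curl H − ∂_t D = J holds for a vector field J : ℝ × ℝ³ → ℝ³. Then each component of A satisfies the inhomogeneous wave equation: Δ A_j − c⁻² ∂_t² A_j = −μ J_j for j = 1,2,3. (The equation □A = μJ of the paper's Theorem on the Maxwell–Ampère law, in vector-calculus form.) -/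
open scoped BigOperators

noncomputable section

/-! The identity `curl curl A = ∇ div A - ΔA` turns the Maxwell–Ampère law into
`μ⁻¹ (∇ div A - ΔA) + ε ∂ₜ (∇φ + ∂ₜ A) = J`. The Lorenz gauge replaces `∇ div A` by
`-c⁻² ∇ ∂ₜ φ`, which cancels against `ε ∂ₜ ∇φ` once `∂ₜ` and `∇` are commuted, since
`εμ = c⁻²`; what is left is `μ⁻¹ (c⁻² ∂ₜ² A - ΔA) = J`. Both the vector identity and the
commutation are instances of the symmetry of second derivatives. -/

section SecondDerivative

variable {E F : Type*} [NormedAddCommGroup E] [NormedSpace ℝ E]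
  [NormedAddCommGroup F] [NormedSpace ℝ F]

theorem contDiff_fderiv_apply {n : ℕ} {f : E → F} (hf : ContDiff ℝ (n + 1) f) (v : E) :
    ContDiff ℝ n (fun x => fderiv ℝ f x v) :=
  (hf.fderiv_right le_rfl).clm_apply contDiff_const

theorem fderiv_fderiv_apply_comm {f : E → F} (hf : ContDiff ℝ 2 f) (x v w : E) :
    fderiv ℝ (fun y => fderiv ℝ f y v) x w = fderiv ℝ (fun y => fderiv ℝ f y w) x v := by
  have hdiff : DifferentiableAt ℝ (fderiv ℝ f) x :=
    (hf.fderiv_right (m := 1) le_rfl).differentiable one_ne_zero x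
  rw [fderiv_clm_apply hdiff (differentiableAt_const v),
    fderiv_clm_apply hdiff (differentiableAt_const w)]
  simpa using (hf.contDiffAt.isSymmSndFDerivAt (by simp)) w v

end SecondDerivative

section SpatialDerivatives

variable {f g : (Fin 3 → ℝ) → ℝ} {x : Fin 3 → ℝ}

theorem pd_const_mul (a : ℝ) (i : Fin 3) : pd i (fun y => a * f y) x = a * pd i f x := by
  change fderiv ℝ (a • f) x _ = _
  rw [fderiv_const_smul_field]
  rfl

theorem pd_sub (hf : DifferentiableAt ℝ f x) (hg : DifferentiableAt ℝ g x) (i : Fin 3) :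
    pd i (fun y => f y - g y) x = pd i f x - pd i g x := by
  simp [pd, fderiv_fun_sub hf hg]

theorem pd_sum {ι : Type*} (s : Finset ι) {f : ι → (Fin 3 → ℝ) → ℝ}
    (hf : ∀ k ∈ s, DifferentiableAt ℝ (f k) x) (i : Fin 3) :
    pd i (fun y => ∑ k ∈ s, f k y) x = ∑ k ∈ s, pd i (f k) x := by
  simp [pd, fderiv_fun_sum hf]

theorem contDiff_pd {n : ℕ} (hf : ContDiff ℝ (n + 1) f) (i : Fin 3) : ContDiff ℝ n (pd i f) :=
  contDiff_fderiv_apply hf _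

theorem pd_pd_comm (hf : ContDiff ℝ 2 f) (i k : Fin 3) : pd i (pd k f) x = pd k (pd i f) x :=
  fderiv_fderiv_apply_comm hf x _ _

end SpatialDerivatives

theorem Fin.sum_univ_three_rotate {M : Type*} [AddCommMonoid M] (g : Fin 3 → M) (j : Fin 3) :
    ∑ k, g k = g j + g (j + 1) + g (j + 2) := by
  rw [← Equiv.sum_comp (Equiv.addLeft j) g]
  simp [Fin.sum_univ_three]

theorem curl3_const_mul (a : ℝ) (F : SpaceTime → (Fin 3 → ℝ)) (t : ℝ) (x : Fin 3 → ℝ)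
    (j : Fin 3) : curl3 (fun p m => a * F p m) t x j = a * curl3 F t x j := by
  simp only [curl3, pd_const_mul]
  ring

theorem curl3_curl3 {F : SpaceTime → (Fin 3 → ℝ)} (hF : ∀ t, ContDiff ℝ 2 (fun y => F (t, y)))
    (t : ℝ) (x : Fin 3 → ℝ) (j : Fin 3) :
    curl3 (fun p => curl3 F p.1 p.2) t x j
      = grad3 (fun p => div3 F p.1 p.2) t x j - lap3 (fun p => F p j) t x := by
  set f : Fin 3 → (Fin 3 → ℝ) → ℝ := fun m y => F (t, y) m
  have hf (m : Fin 3) : ContDiff ℝ 2 (f m) := (contDiff_apply ℝ ℝ m).comp (hF t)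
  have hdf (m i : Fin 3) : Differentiable ℝ (pd i (f m)) :=
    (contDiff_pd (hf m) i).differentiable one_ne_zero
  have hcurl (i m : Fin 3) : pd i (fun y => curl3 F t y m) x
      = pd i (pd (m + 1) (f (m + 2))) x - pd i (pd (m + 2) (f (m + 1))) x :=
    pd_sub (hdf _ _ x) (hdf _ _ x) i
  have hdiv : pd j (fun y => div3 F t y) x = ∑ k, pd j (pd k (f k)) x :=
    pd_sum _ (fun k _ => hdf k k x) j
  have hlap : lap3 (fun p => F p j) t x = ∑ k, pd k (pd k (f j)) x := rfl
  show pd (j + 1) (fun y => curl3 F t y (j + 2)) x - pd (j + 2) (fun y => curl3 F t y (j + 1)) x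
    = pd j (fun y => div3 F t y) x - lap3 (fun p => F p j) t x
  rw [hcurl, hcurl, hdiv, hlap, Fin.sum_univ_three_rotate _ j, Fin.sum_univ_three_rotate _ j]
  have h1 : j + 2 + 1 = j := by grind
  have h2 : j + 2 + 2 = j + 1 := by grind
  have h3 : j + 1 + 1 = j + 2 := by grind
  have h4 : j + 1 + 2 = j := by grind
  rw [h1, h2, h3, h4]
  linear_combination pd_pd_comm (x := x) (hf (j + 1)) (j + 1) j
    + pd_pd_comm (x := x) (hf (j + 2)) (j + 2) j

section TimeDerivatives

variable {g h : SpaceTime → ℝ} {t : ℝ} {x : Fin 3 → ℝ}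

theorem grad3_eq_fderiv (hg : DifferentiableAt ℝ g (t, x)) (j : Fin 3) :
    grad3 g t x j = fderiv ℝ g (t, x) (0, Pi.single j 1) := by
  have hslice : HasFDerivAt (fun y => g (t, y))
      ((fderiv ℝ g (t, x)).comp (ContinuousLinearMap.inr ℝ ℝ (Fin 3 → ℝ))) x :=
    hg.hasFDerivAt.comp x (hasFDerivAt_prodMk_right t x)
  rw [grad3, pd, hslice.fderiv]
  rfl

theorem dt1_eq_fderiv (hg : DifferentiableAt ℝ g (t, x)) : dt1 g t x = fderiv ℝ g (t, x) (1, 0) :=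
  (hg.hasFDerivAt.comp_hasDerivAt t ((hasDerivAt_id t).prodMk (hasDerivAt_const t x))).deriv

theorem grad3_const_mul (a : ℝ) (j : Fin 3) :
    grad3 (fun p => a * g p) t x j = a * grad3 g t x j :=
  pd_const_mul a j

theorem dt1_const_mul (a : ℝ) : dt1 (fun p => a * g p) t x = a * dt1 g t x :=
  deriv_const_mul_field a

theorem dt1_add (hg : DifferentiableAt ℝ g (t, x)) (hh : DifferentiableAt ℝ h (t, x)) :
    dt1 (fun p => g p + h p) t x = dt1 g t x + dt1 h t x := by
  rw [dt1_eq_fderiv (hg.fun_add hh), dt1_eq_fderiv hg, dt1_eq_fderiv hh, fderiv_fun_add hg hh]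
  rfl

theorem contDiff_grad3 {n : ℕ} (hg : ContDiff ℝ (n + 1) g) (j : Fin 3) :
    ContDiff ℝ n (fun p : SpaceTime => grad3 g p.1 p.2 j) := by
  have hg' := hg.differentiable (by simp)
  simpa only [grad3_eq_fderiv (hg' _)] using contDiff_fderiv_apply hg (0, Pi.single j 1)

theorem contDiff_dt1 {n : ℕ} (hg : ContDiff ℝ (n + 1) g) :
    ContDiff ℝ n (fun p : SpaceTime => dt1 g p.1 p.2) := by
  have hg' := hg.differentiable (by simp)
  simpa only [dt1_eq_fderiv (hg' _)] using contDiff_fderiv_apply hg (1, 0)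

theorem dt1_grad3_comm (hg : ContDiff ℝ 2 g) (j : Fin 3) :
    dt1 (fun p => grad3 g p.1 p.2 j) t x = grad3 (fun p => dt1 g p.1 p.2) t x j := by
  have hg' := hg.differentiable two_ne_zero
  rw [dt1_eq_fderiv ((contDiff_grad3 hg j).differentiable one_ne_zero _),
    grad3_eq_fderiv ((contDiff_dt1 hg).differentiable one_ne_zero _)]
  simp only [grad3_eq_fderiv (hg' _), dt1_eq_fderiv (hg' _)]
  exact fderiv_fderiv_apply_comm hg _ _ _

end TimeDerivatives

theorem wave_equation_for_A_general
    (ε μ c : ℝ)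
    (hεμc : ε * μ * c ^ 2 = 1)
    (A : SpaceTime → (Fin 3 → ℝ)) (φ : SpaceTime → ℝ)
    (hA : ContDiff ℝ (⊤ : ℕ∞) A) (hφ : ContDiff ℝ (⊤ : ℕ∞) φ)
    (hgauge : ∀ (t : ℝ) (x : Fin 3 → ℝ),
      div3 A t x + c⁻¹ ^ 2 * dt1 φ t x = 0)
    (E B H D : SpaceTime → (Fin 3 → ℝ))
    (hE : ∀ (t : ℝ) (x : Fin 3 → ℝ) (j : Fin 3),
      E (t, x) j = -grad3 φ t x j - dt1 (fun p => A p j) t x)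
    (hB : ∀ (t : ℝ) (x : Fin 3 → ℝ) (j : Fin 3), B (t, x) j = curl3 A t x j)
    (hH : ∀ (p : SpaceTime) (j : Fin 3), H p j = μ⁻¹ * B p j)
    (hD : ∀ (p : SpaceTime) (j : Fin 3), D p j = ε * E p j)
    (J : SpaceTime → (Fin 3 → ℝ))
    (hAmpere : ∀ (t : ℝ) (x : Fin 3 → ℝ) (j : Fin 3),
      curl3 H t x j - dt1 (fun p => D p j) t x = J (t, x) j) :
    ∀ (t : ℝ) (x : Fin 3 → ℝ) (j : Fin 3),
      lap3 (fun p => A p j) t x - c⁻¹ ^ 2 * dt2 (fun p => A p j) t x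
        = -(μ * J (t, x) j) := by
  intro t x j
  have hA2 : ContDiff ℝ 2 A := hA.of_le (by norm_cast)
  have hAj : ContDiff ℝ 2 (fun p => A p j) := (contDiff_apply ℝ ℝ j).comp hA2
  have hφ2 : ContDiff ℝ 2 φ := hφ.of_le (by norm_cast)
  have hcurlH : curl3 H t x j
      = μ⁻¹ * (grad3 (fun p => div3 A p.1 p.2) t x j - lap3 (fun p => A p j) t x) := by
    have hH' : H = fun p m => μ⁻¹ * curl3 A p.1 p.2 m :=
      funext₂ fun p m => (hH p m).trans (congrArg _ (hB p.1 p.2 m))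
    rw [hH', curl3_const_mul, curl3_curl3 fun s => hA2.comp (contDiff_prodMk_right s)]
  have hgradDiv : grad3 (fun p => div3 A p.1 p.2) t x j
      = -c⁻¹ ^ 2 * grad3 (fun p => dt1 φ p.1 p.2) t x j := by
    have hdiv : (fun p : SpaceTime => div3 A p.1 p.2) = fun p => -c⁻¹ ^ 2 * dt1 φ p.1 p.2 :=
      funext fun p => by linear_combination hgauge p.1 p.2
    rw [hdiv, grad3_const_mul]
  have hdtD : dt1 (fun p => D p j) t x
      = -ε * (grad3 (fun p => dt1 φ p.1 p.2) t x j + dt2 (fun p => A p j) t x) := by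
    have hDj : (fun p => D p j)
        = fun p => -ε * (grad3 φ p.1 p.2 j + dt1 (fun q => A q j) p.1 p.2) :=
      funext fun p => by rw [hD, hE]; ring
    rw [hDj, dt1_const_mul, dt1_add ((contDiff_grad3 hφ2 j).differentiable one_ne_zero _)
      ((contDiff_dt1 hAj).differentiable one_ne_zero _), dt1_grad3_comm hφ2]
    rfl
  have hμ : μ ≠ 0 := by rintro rfl; simp at hεμc
  have hc : c ≠ 0 := by rintro rfl; simp at hεμc
  have hAmpere' := hAmpere t x j
  rw [hcurlH, hgradDiv, hdtD] at hAmpere'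
  field_simp at hAmpere' ⊢
  linear_combination -hAmpere'
    + (grad3 (fun p => dt1 φ p.1 p.2) t x j + dt2 (fun p => A p j) t x) * hεμc

/-- in the Lorenz gauge, with `εμc² = 1`, the Maxwell–Ampère
equation implies the inhomogeneous wave equation `□A = μJ` componentwise. -/
theorem wave_equation_for_A
    (ε μ c : ℝ) (hε : 0 < ε) (hμ : 0 < μ) (hc : 0 < c)
    (hεμc : ε * μ * c ^ 2 = 1)
    (A : SpaceTime → (Fin 3 → ℝ)) (φ : SpaceTime → ℝ)
    (hA : ContDiff ℝ (⊤ : ℕ∞) A) (hφ : ContDiff ℝ (⊤ : ℕ∞) φ)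
    (hgauge : ∀ (t : ℝ) (x : Fin 3 → ℝ),
      div3 A t x + c⁻¹ ^ 2 * dt1 φ t x = 0)
    (E B H D : SpaceTime → (Fin 3 → ℝ))
    (hE : ∀ (t : ℝ) (x : Fin 3 → ℝ) (j : Fin 3),
      E (t, x) j = -grad3 φ t x j - dt1 (fun p => A p j) t x)
    (hB : ∀ (t : ℝ) (x : Fin 3 → ℝ) (j : Fin 3), B (t, x) j = curl3 A t x j)
    (hH : ∀ (p : SpaceTime) (j : Fin 3), H p j = μ⁻¹ * B p j)
    (hD : ∀ (p : SpaceTime) (j : Fin 3), D p j = ε * E p j)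
    (J : SpaceTime → (Fin 3 → ℝ))
    (hAmpere : ∀ (t : ℝ) (x : Fin 3 → ℝ) (j : Fin 3),
      curl3 H t x j - dt1 (fun p => D p j) t x = J (t, x) j) :
    ∀ (t : ℝ) (x : Fin 3 → ℝ) (j : Fin 3),
      lap3 (fun p => A p j) t x - c⁻¹ ^ 2 * dt2 (fun p => A p j) t x
        = -(μ * J (t, x) j) :=
  wave_equation_for_A_general ε μ c hεμc A φ hA hφ hgauge E B H D hE hB hH hD J hAmpere
end
end

section
/- For σ > 0 let ρ_σ : ℝ³ → ℝ be the Gaussian ρ_σ(x) := (σ/π)^{3/2} exp(−σ|x|²), and define the gravitational interaction energy 𝓔_σ := −∫_{ℝ³}∫_{ℝ³} ρ_σ(x) ρ_σ(y) / (8π|x−y|) dx dy. Then 𝓔_σ = −(1/(4π)) · (σ/(2π))^{1/2}. (The explicit evaluation of the field energy of a Gaussian mass distribution in the paper's discussion of Maxwell's and Abraham's negative-energy objection.) -/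
open scoped BigOperators

noncomputable section

/-- Euclidean 3-space. -/
abbrev E3 : Type := EuclideanSpace ℝ (Fin 3)

/-- Partial derivative in coordinate direction `j` on Euclidean 3-space. -/
def pdE (j : Fin 3) (f : E3 → ℝ) (x : E3) : ℝ :=
  fderiv ℝ f x (EuclideanSpace.single j 1)

/-- Laplacian on Euclidean 3-space. -/
def lapE (f : E3 → ℝ) (x : E3) : ℝ :=
  ∑ j : Fin 3, pdE j (fun y => pdE j f y) x

/-! Substituting `y = x - z` and integrating over `x` first, completing the square
`|x|² + |x - z|² = 2|x - z/2|² + |z|²/2` turns the `x`-integral into a Gaussian in `z`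
of exponent `σ/2`. What remains is `∫ e^{-b|z|²}/|z| dz`, which in polar coordinates on `ℝ³`
is `4π ∫₀^∞ r e^{-br²} dr = 2π/b`. The same exact `x`-integral, being of a nonnegative
function, also gives the integrability needed for Fubini. -/

open MeasureTheory Metric Set Real Module

lemma integral_Ioi_mul_exp_neg_mul_sq {b : ℝ} (hb : 0 < b) :
    ∫ r in Ioi (0 : ℝ), r * exp (-b * r ^ 2) = (2 * b)⁻¹ := by
  rw [← Complex.ofReal_inj, ← integral_complex_ofReal]
  push_cast
  exact integral_mul_cexp_neg_mul_sq (by simpa using hb)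

theorem integral_integral_eq_integral_integral_sub {G E : Type*} [MeasurableSpace G] [AddGroup G]
    [MeasurableAdd G] [MeasurableNeg G] [NormedAddCommGroup E] [NormedSpace ℝ E]
    {μ : Measure G} [SFinite μ] [μ.IsNegInvariant] [μ.IsAddLeftInvariant] {F : G → G → E}
    (hF : Integrable (fun p : G × G => F p.1 (p.1 - p.2)) (μ.prod μ)) :
    ∫ x, ∫ y, F x y ∂μ ∂μ = ∫ z, ∫ x, F x (x - z) ∂μ ∂μ := by
  have h : (fun x => ∫ y, F x y ∂μ) = fun x => ∫ z, F x (x - z) ∂μ :=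
    funext fun x => (integral_sub_left_eq_self (F x) μ x).symm
  rw [h]
  exact integral_integral_swap hF

section NormGaussian

variable {V : Type*} [NormedAddCommGroup V]

def normGaussian (a : ℝ) (x : V) : ℝ := exp (-a * ‖x‖ ^ 2)

@[fun_prop]
lemma continuous_normGaussian (a : ℝ) : Continuous (normGaussian a : V → ℝ) := by
  unfold normGaussian; fun_prop

lemma normGaussian_pos (a : ℝ) (x : V) : 0 < normGaussian a x := exp_pos _

variable [InnerProductSpace ℝ V]

lemma norm_sq_add_norm_sub_sq (x z : V) :
    ‖x‖ ^ 2 + ‖x - z‖ ^ 2 = 2 * ‖x - (2⁻¹ : ℝ) • z‖ ^ 2 + ‖z‖ ^ 2 / 2 := by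
  simp only [← real_inner_self_eq_norm_sq, inner_sub_left, inner_sub_right, inner_smul_left,
    inner_smul_right, real_inner_comm x z, conj_trivial]
  ring

lemma normGaussian_mul_normGaussian_sub (a : ℝ) (x z : V) :
    normGaussian a x * normGaussian a (x - z) =
      normGaussian (a / 2) z * normGaussian (2 * a) (x - (2⁻¹ : ℝ) • z) := by
  simp only [normGaussian, ← exp_add]
  congr 1
  linear_combination (-a) * norm_sq_add_norm_sub_sq x z

variable [FiniteDimensional ℝ V] [MeasurableSpace V] [BorelSpace V]

lemma integral_normGaussian {a : ℝ} (ha : 0 < a) :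
    ∫ x : V, normGaussian a x = (π / a) ^ (finrank ℝ V / 2 : ℝ) :=
  GaussianFourier.integral_rexp_neg_mul_sq_norm ha

lemma integrable_normGaussian {a : ℝ} (ha : 0 < a) : Integrable (normGaussian a : V → ℝ) :=
  .of_integral_ne_zero (by rw [integral_normGaussian ha]; positivity)

lemma integrable_normGaussian_mul_normGaussian_sub {a : ℝ} (ha : 0 < a) (z : V) :
    Integrable fun x => normGaussian a x * normGaussian a (x - z) := by
  simp_rw [normGaussian_mul_normGaussian_sub]
  exact ((integrable_normGaussian (by positivity)).comp_sub_right _).const_mul _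

lemma integral_normGaussian_mul_normGaussian_sub {a : ℝ} (ha : 0 < a) (z : V) :
    ∫ x, normGaussian a x * normGaussian a (x - z) =
      (π / (2 * a)) ^ (finrank ℝ V / 2 : ℝ) * normGaussian (a / 2) z := by
  simp_rw [normGaussian_mul_normGaussian_sub, integral_const_mul,
    integral_sub_right_eq_self (normGaussian (2 * a)),
    integral_normGaussian (by positivity : 0 < 2 * a)]
  ring

lemma integrable_normGaussian_div_norm {b : ℝ} (hb : 0 < b) (hV : 2 ≤ finrank ℝ V) :
    Integrable fun z : V => normGaussian b z / ‖z‖ := by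
  have : Nontrivial V := Module.nontrivial_of_finrank_pos (R := ℝ) (by omega)
  obtain ⟨k, hk⟩ := Nat.exists_eq_add_of_le' hV
  refine (integrable_fun_norm_addHaar volume (f := fun r => exp (-b * r ^ 2) / r)).2 ?_
  refine (integrableOn_rpow_mul_exp_neg_mul_sq hb (s := k) ?_).congr_fun
    (fun r (hr : 0 < r) => ?_) measurableSet_Ioi
  · linarith [(Nat.cast_nonneg k : (0 : ℝ) ≤ k)]
  · show r ^ (k : ℝ) * _ = _
    rw [hk, rpow_natCast, smul_eq_mul, show k + 2 - 1 = k + 1 by omega, pow_succ]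
    field_simp
    ring

lemma integral_fun_norm_of_finrank_eq_three (hV : finrank ℝ V = 3) (f : ℝ → ℝ) :
    ∫ x : V, f ‖x‖ = 4 * π * ∫ r in Ioi (0 : ℝ), r ^ 2 * f r := by
  have : Nontrivial V := Module.nontrivial_of_finrank_pos (R := ℝ) (by omega)
  rw [integral_fun_norm_addHaar volume f, measureReal_def,
    InnerProductSpace.volume_ball_of_dim_odd (k := 1) hV, hV]
  norm_num [Nat.doubleFactorial]
  rw [ENNReal.toReal_ofReal (by positivity)]
  ring

lemma integral_normGaussian_div_norm {b : ℝ} (hb : 0 < b) (hV : finrank ℝ V = 3) :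
    ∫ z : V, normGaussian b z / ‖z‖ = 2 * π / b := by
  unfold normGaussian
  rw [integral_fun_norm_of_finrank_eq_three hV (fun r => exp (-b * r ^ 2) / r),
    setIntegral_congr_fun measurableSet_Ioi
    (g := fun r => r * exp (-b * r ^ 2)) (fun r (hr : 0 < r) => by field_simp),
    integral_Ioi_mul_exp_neg_mul_sq hb]
  field_simp
  ring

lemma integrable_normGaussian_mul_normGaussian_sub_div_norm {a : ℝ} (ha : 0 < a)
    (hV : 2 ≤ finrank ℝ V) :
    Integrable (fun p : V × V => normGaussian a p.1 * normGaussian a (p.1 - p.2) / ‖p.2‖)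
      (volume.prod volume) := by
  refine (integrable_prod_iff' (Measurable.aestronglyMeasurable (by fun_prop))).2
    ⟨.of_forall fun z => (integrable_normGaussian_mul_normGaussian_sub ha z).div_const ‖z‖, ?_⟩
  have h : (fun z : V => ∫ x, ‖normGaussian a x * normGaussian a (x - z) / ‖z‖‖) =
      fun z => (π / (2 * a)) ^ (finrank ℝ V / 2 : ℝ) * (normGaussian (a / 2) z / ‖z‖) := by
    funext z
    simp_rw [norm_div, norm_mul, norm_norm, Real.norm_of_nonneg (normGaussian_pos _ _).le,
      integral_div, integral_normGaussian_mul_normGaussian_sub ha, mul_div_assoc]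
  rw [h]
  exact (integrable_normGaussian_div_norm (by positivity) hV).const_mul _

theorem integral_integral_normGaussian_mul_normGaussian_div_norm_sub {a : ℝ} (ha : 0 < a)
    (hV : finrank ℝ V = 3) :
    ∫ x : V, ∫ y : V, normGaussian a x * normGaussian a y / ‖x - y‖ =
      (π / (2 * a)) ^ (3 / 2 : ℝ) * (4 * π / a) := by
  rw [integral_integral_eq_integral_integral_sub (by
    simpa only [sub_sub_cancel] using
      integrable_normGaussian_mul_normGaussian_sub_div_norm ha (by omega))]
  simp_rw [sub_sub_cancel, integral_div, integral_normGaussian_mul_normGaussian_sub ha, hV,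
    mul_div_assoc, integral_const_mul,
    integral_normGaussian_div_norm (by positivity : 0 < a / 2) hV]
  push_cast
  ring

end NormGaussian

/-- the gravitational interaction energy of the Gaussian
`ρ_σ(x) = (σ/π)^{3/2} exp(-σ|x|²)` is
`𝓔_σ = -∫∫ ρ_σ(x)ρ_σ(y)/(8π|x-y|) dx dy = -(1/(4π))·(σ/(2π))^{1/2}`. -/
theorem gaussian_gravitational_energy
    (σ : ℝ) (hσ : 0 < σ)
    (ρ : E3 → ℝ)
    (hρ : ∀ x : E3, ρ x = (σ / Real.pi) ^ ((3 : ℝ) / 2) * Real.exp (-σ * ‖x‖ ^ 2))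
    (𝓔 : ℝ)
    (h𝓔 : 𝓔 = -∫ x : E3, ∫ y : E3, ρ x * ρ y / (8 * Real.pi * ‖x - y‖)) :
    𝓔 = -(1 / (4 * Real.pi)) * (σ / (2 * Real.pi)) ^ ((1 : ℝ) / 2) := by
  set c := (σ / π) ^ ((3 : ℝ) / 2)
  have hintegrand : ∀ x y : E3, ρ x * ρ y / (8 * π * ‖x - y‖) =
      c ^ 2 / (8 * π) * (normGaussian σ x * normGaussian σ y / ‖x - y‖) := by
    intro x y
    rw [hρ, hρ, normGaussian, normGaussian]
    ring
  have hc : c ^ 2 * (π / (2 * σ)) ^ (3 / 2 : ℝ) =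
      σ / (2 * π) * (σ / (2 * π)) ^ ((1 : ℝ) / 2) := by
    rw [rpow_pow_comm (by positivity), ← mul_rpow (by positivity) (by positivity),
      ← rpow_one_add' (by positivity) (by norm_num)]
    congr 1
    · field_simp
    · norm_num
  calc 𝓔 = -(c ^ 2 / (8 * π) *
          ∫ x : E3, ∫ y : E3, normGaussian σ x * normGaussian σ y / ‖x - y‖) := by
        simp_rw [h𝓔, hintegrand, integral_const_mul]
    _ = -(c ^ 2 / (8 * π) * ((π / (2 * σ)) ^ (3 / 2 : ℝ) * (4 * π / σ))) := by
        rw [integral_integral_normGaussian_mul_normGaussian_div_norm_sub hσ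
          finrank_euclideanSpace_fin]
    _ = -(c ^ 2 * (π / (2 * σ)) ^ (3 / 2 : ℝ)) / (2 * σ) := by
        field_simp
        ring
    _ = _ := by
        rw [hc]
        field_simp
        ring
end
end

section
/- For σ > 0 let ρ_σ(x) := (σ/π)^{3/2} exp(−σ|x|²) on ℝ³ and 𝓔_σ := −∫_{ℝ³}∫_{ℝ³} ρ_σ(x) ρ_σ(y) / (8π|x−y|) dx dy. Then: (i) the total mass is conserved, ∫_{ℝ³} ρ_σ(x) dx = 1 for every σ > 0; and (ii) 𝓔_σ → −∞ as σ → ∞. Hence as the unit mass concentrates at the origin the gravitational field energy diverges to −∞ (the dynamical instability of solutions of Poisson's equation exhibited in the paper). -/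
open scoped BigOperators

noncomputable section

/-- The Gaussian density of the paper's instability example. -/
def gaussianDensity (σ : ℝ) (x : E3) : ℝ :=
  (σ / Real.pi) ^ ((3 : ℝ) / 2) * Real.exp (-σ * ‖x‖ ^ 2)

/-- The gravitational field energy of the Gaussian density. -/
def gravEnergy (σ : ℝ) : ℝ :=
  -∫ x : E3, ∫ y : E3,
    gaussianDensity σ x * gaussianDensity σ y / (8 * Real.pi * ‖x - y‖)

namespace GaussianInstabilityAux

open MeasureTheory Real Set Metric Filter

lemma finrank_E3 : Module.finrank ℝ E3 = 3 := by
  simp [finrank_euclideanSpace]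

lemma gd_pos {σ : ℝ} (hσ : 0 < σ) (x : E3) : 0 < gaussianDensity σ x := by
  unfold gaussianDensity
  have := Real.pi_pos
  positivity

lemma gd_integrable {σ : ℝ} (hσ : 0 < σ) : Integrable (gaussianDensity σ) := by
  have h := (GaussianFourier.integrable_cexp_neg_mul_sq_norm_add (V := E3) (b := (σ:ℂ))
    (by simpa using hσ) 0 0).norm
  have h2 : Integrable (fun x : E3 => Real.exp (-σ * ‖x‖^2)) := by
    refine h.congr (Filter.Eventually.of_forall fun x => ?_)
    simp [Complex.norm_exp, ← Complex.ofReal_pow, ← Complex.ofReal_mul, ← Complex.ofReal_neg]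
  exact h2.const_mul _

lemma gd_le (x : E3) : gaussianDensity 1 x ≤ (1 / Real.pi) ^ ((3:ℝ)/2) := by
  unfold gaussianDensity
  have h1 : Real.exp (-1 * ‖x‖^2) ≤ 1 := by
    rw [Real.exp_le_one_iff]; nlinarith [sq_nonneg ‖x‖]
  nlinarith [Real.rpow_nonneg (le_of_lt (div_pos one_pos Real.pi_pos)) ((3:ℝ)/2), h1,
    Real.exp_pos (-1 * ‖x‖^2)]

lemma mass {σ : ℝ} (hσ : 0 < σ) : ∫ x : E3, gaussianDensity σ x = 1 := by
  unfold gaussianDensity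
  rw [integral_const_mul, GaussianFourier.integral_rexp_neg_mul_sq_norm (V := E3) hσ]
  rw [finrank_E3]
  norm_num
  rw [← Real.mul_rpow (div_nonneg hσ.le Real.pi_pos.le) (div_nonneg Real.pi_pos.le hσ.le)]
  rw [div_mul_div_comm, mul_comm σ Real.pi, div_self (by positivity), Real.one_rpow]

lemma invnorm_integrable : IntegrableOn (fun w : E3 => ‖w‖⁻¹) (ball 0 1) volume := by
  have hmeas : Measurable (fun w : E3 => ‖w‖⁻¹) := measurable_norm.inv
  refine ⟨hmeas.aestronglyMeasurable, ?_⟩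
  rw [hasFiniteIntegral_iff_ofReal (Filter.Eventually.of_forall fun w => by positivity)]
  rw [lintegral_eq_lintegral_meas_le _ (Filter.Eventually.of_forall fun w => by positivity)
    hmeas.aemeasurable]
  set f : ℝ → ENNReal := fun t => (volume.restrict (ball (0:E3) 1)) {a | t ≤ ‖a‖⁻¹} with hf
  have bound1 : ∀ t, f t ≤ volume (ball (0:E3) 1) := fun t => by
    rw [hf]
    calc (volume.restrict (ball (0:E3) 1)) {a | t ≤ ‖a‖⁻¹}
        ≤ (volume.restrict (ball (0:E3) 1)) univ := measure_mono (subset_univ _)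
      _ = volume (ball (0:E3) 1) := by rw [Measure.restrict_apply_univ]
  have bound2 : ∀ t ∈ Ioi (1:ℝ), f t ≤ ENNReal.ofReal (t ^ (-3:ℝ)) * volume (ball (0:E3) 1) := by
    intro t ht
    have ht0 : (0:ℝ) < t := lt_trans one_pos ht
    have hsub : {a : E3 | t ≤ ‖a‖⁻¹} ⊆ closedBall 0 t⁻¹ := by
      intro a ha
      simp only [mem_setOf_eq] at ha
      have h2 : (‖a‖⁻¹)⁻¹ ≤ t⁻¹ := inv_anti₀ ht0 ha
      rw [inv_inv] at h2
      rwa [mem_closedBall_zero_iff]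
    calc f t ≤ volume (closedBall (0:E3) t⁻¹) :=
          le_trans (Measure.restrict_le_self _) (measure_mono hsub)
      _ = ENNReal.ofReal (t⁻¹ ^ Module.finrank ℝ E3) * volume (ball (0:E3) 1) :=
          Measure.addHaar_closedBall _ _ (by positivity)
      _ = ENNReal.ofReal (t ^ (-3:ℝ)) * volume (ball (0:E3) 1) := by
          congr 2
          rw [finrank_euclideanSpace, Fintype.card_fin]
          rw [← Real.rpow_natCast t⁻¹ 3, Real.inv_rpow ht0.le, ← Real.rpow_neg ht0.le]
          norm_num
  calc ∫⁻ t in Ioi (0:ℝ), f t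
      ≤ ∫⁻ t in Ioc (0:ℝ) 1 ∪ Ioi 1, f t := lintegral_mono_set Ioi_subset_Ioc_union_Ioi
    _ ≤ (∫⁻ t in Ioc (0:ℝ) 1, f t) + ∫⁻ t in Ioi (1:ℝ), f t := lintegral_union_le _ _ _
    _ < ⊤ := by
        refine ENNReal.add_lt_top.2 ⟨?_, ?_⟩
        · calc (∫⁻ t in Ioc (0:ℝ) 1, f t) ≤ ∫⁻ _ in Ioc (0:ℝ) 1, volume (ball (0:E3) 1) :=
              lintegral_mono fun t => bound1 t
            _ = volume (ball (0:E3) 1) * volume (Ioc (0:ℝ) 1) := by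
              rw [setLIntegral_const]
            _ < ⊤ := by
              refine ENNReal.mul_lt_top measure_ball_lt_top ?_
              simp [Real.volume_Ioc]
        · calc (∫⁻ t in Ioi (1:ℝ), f t)
              ≤ ∫⁻ t in Ioi (1:ℝ), ENNReal.ofReal (t ^ (-3:ℝ)) * volume (ball (0:E3) 1) :=
                setLIntegral_mono' measurableSet_Ioi bound2
            _ = (∫⁻ t in Ioi (1:ℝ), ENNReal.ofReal (t ^ (-3:ℝ))) * volume (ball (0:E3) 1) :=
                lintegral_mul_const' _ _ measure_ball_lt_top.ne
            _ < ⊤ := by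
                refine ENNReal.mul_lt_top ?_ measure_ball_lt_top
                exact (integrableOn_Ioi_rpow_of_lt (by norm_num) one_pos).setLIntegral_lt_top

/-- The product-space integrand at `σ = 1`. -/
def F : E3 × E3 → ℝ := fun p =>
  gaussianDensity 1 p.1 * gaussianDensity 1 p.2 / (8 * Real.pi * ‖p.1 - p.2‖)

lemma F_nonneg (p : E3 × E3) : 0 ≤ F p := by
  unfold F
  have := Real.pi_pos
  have h1 := (gd_pos one_pos p.1).le
  have h2 := (gd_pos one_pos p.2).le
  positivity

lemma F_integrable : Integrable F (volume.prod volume) := by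
  set ρ := gaussianDensity 1
  set g : E3 → ℝ := (ball (0:E3) 1).indicator (fun w => ‖w‖⁻¹) with hg
  have hgInt : Integrable g := by
    rw [hg, integrable_indicator_iff measurableSet_ball]
    exact invnorm_integrable
  have hρInt : Integrable ρ := gd_integrable one_pos
  have hG1 : Integrable (fun p : E3 × E3 => ρ p.2 * g (p.1 - p.2)) (volume.prod volume) := by
    have := hρInt.convolution_integrand (ContinuousLinearMap.mul ℝ ℝ) hgInt
    simpa using this
  have hG2 : Integrable (fun p : E3 × E3 => ρ p.1 * ρ p.2) (volume.prod volume) :=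
    hρInt.mul_prod hρInt
  have hmeas : AEStronglyMeasurable F (volume.prod volume) := by
    apply Measurable.aestronglyMeasurable
    unfold F
    have hgm : Measurable (gaussianDensity 1) := by
      unfold gaussianDensity; fun_prop
    apply Measurable.div
    · exact (hgm.comp measurable_fst).mul (hgm.comp measurable_snd)
    · fun_prop
  set c : ℝ := (1 / Real.pi) ^ ((3:ℝ)/2) * (8 * Real.pi)⁻¹ with hc
  refine Integrable.mono' (((hG1.const_mul c).add (hG2.const_mul (8 * Real.pi)⁻¹))) hmeas
    (Filter.Eventually.of_forall fun p => ?_)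
  rw [Real.norm_of_nonneg (F_nonneg p)]
  obtain ⟨x, y⟩ := p
  have hπ := Real.pi_pos
  have hρx := gd_pos one_pos x
  have hρy := gd_pos one_pos y
  have hFe : F (x, y) = ρ x * ρ y * (8 * Real.pi)⁻¹ * ‖x - y‖⁻¹ := by
    unfold F
    rw [div_eq_mul_inv, mul_inv]
    ring
  by_cases hxy : ‖x - y‖ < 1
  · have hgval : g (x - y) = ‖x - y‖⁻¹ := by
      rw [hg, indicator_of_mem (by rwa [mem_ball_zero_iff])]
    have key : F (x, y) ≤ c * (ρ y * g (x - y)) := by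
      rw [hFe, hgval, hc]
      have hb : ρ x ≤ (1 / Real.pi) ^ ((3:ℝ)/2) := gd_le x
      have h8 : (0:ℝ) ≤ (8 * Real.pi)⁻¹ := by positivity
      have hn : (0:ℝ) ≤ ‖x - y‖⁻¹ := by positivity
      nlinarith [mul_nonneg (mul_nonneg hρy.le h8) hn, hρy.le]
    refine key.trans ?_
    have : 0 ≤ (8 * Real.pi)⁻¹ * (ρ x * ρ y) := by positivity
    simp only [Pi.add_apply]
    linarith
  · push_neg at hxy
    have hgval : g (x - y) = 0 := by
      rw [hg, indicator_of_notMem (by simp [mem_ball_zero_iff]; linarith)]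
    have key : F (x, y) ≤ (8 * Real.pi)⁻¹ * (ρ x * ρ y) := by
      rw [hFe]
      have hinv : ‖x - y‖⁻¹ ≤ 1 := by
        rw [inv_le_one_iff₀]; right; exact hxy
      have hpos : (0:ℝ) ≤ ρ x * ρ y * (8 * Real.pi)⁻¹ := by positivity
      nlinarith
    refine key.trans ?_
    simp only [Pi.add_apply, hgval, mul_zero]
    linarith

lemma C_pos : 0 < ∫ u : E3, ∫ v : E3,
    gaussianDensity 1 u * gaussianDensity 1 v / (8 * Real.pi * ‖u - v‖) := by
  have h : (∫ u : E3, ∫ v : E3,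
      gaussianDensity 1 u * gaussianDensity 1 v / (8 * Real.pi * ‖u - v‖))
      = ∫ p : E3 × E3, F p ∂(volume.prod volume) := (integral_prod F F_integrable).symm
  rw [h]
  rw [integral_pos_iff_support_of_nonneg F_nonneg F_integrable]
  set z : E3 := EuclideanSpace.single (0 : Fin 3) (3:ℝ) with hz
  have hznorm : ‖z‖ = 3 := by
    rw [hz, EuclideanSpace.norm_single]
    norm_num
  have hsub : (ball (0:E3) 1) ×ˢ (ball z 1) ⊆ Function.support F := by
    rintro ⟨x, y⟩ ⟨hx, hy⟩
    rw [mem_ball_zero_iff] at hx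
    rw [mem_ball] at hy
    have hdist : (0:ℝ) < ‖x - y‖ := by
      have h1 : ‖y‖ ≥ ‖z‖ - ‖y - z‖ := by
        have := norm_sub_norm_le z y
        rw [norm_sub_rev z y] at this
        linarith
      have h2 : ‖y - z‖ < 1 := by rwa [← dist_eq_norm]
      have h3 : ‖x - y‖ ≥ ‖y‖ - ‖x‖ := by
        have := norm_sub_norm_le y x
        rw [norm_sub_rev y x] at this
        linarith
      rw [hznorm] at h1
      linarith
    apply ne_of_gt
    unfold F
    have := Real.pi_pos
    have h1 := gd_pos one_pos x
    have h2 := gd_pos one_pos y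
    positivity
  have hm : 0 < (volume.prod volume) ((ball (0:E3) 1) ×ˢ (ball z 1)) := by
    rw [Measure.prod_prod]
    exact ENNReal.mul_pos (measure_ball_pos _ _ one_pos).ne' (measure_ball_pos _ _ one_pos).ne'
  exact lt_of_lt_of_le hm (measure_mono hsub)

lemma gd_scale {σ : ℝ} (hσ : 0 < σ) (v : E3) :
    gaussianDensity σ ((Real.sqrt σ)⁻¹ • v) = Real.sqrt σ ^ 3 * gaussianDensity 1 v := by
  set s := Real.sqrt σ with hs
  have hs0 : 0 < s := Real.sqrt_pos.mpr hσ
  have hs2 : s ^ 2 = σ := Real.sq_sqrt hσ.le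
  unfold gaussianDensity
  have hnorm : ‖s⁻¹ • v‖ = s⁻¹ * ‖v‖ := by
    rw [norm_smul, Real.norm_eq_abs, abs_of_pos (inv_pos.mpr hs0)]
  have hexp : -σ * ‖s⁻¹ • v‖ ^ 2 = -1 * ‖v‖ ^ 2 := by
    rw [hnorm, mul_pow, ← hs2]; field_simp
  rw [hexp]
  have hcoef : (σ / Real.pi) ^ ((3:ℝ)/2) = s ^ 3 * (1 / Real.pi) ^ ((3:ℝ)/2) := by
    have hπ := Real.pi_pos
    rw [show σ / Real.pi = σ * (1 / Real.pi) by ring,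
      Real.mul_rpow hσ.le (by positivity), ← hs2, ← Real.rpow_natCast s 2,
      ← Real.rpow_mul hs0.le]
    norm_num
  rw [hcoef]; ring

lemma norm_shift {s : ℝ} (hs : 0 < s) (x v : E3) :
    ‖x - s⁻¹ • v‖ = s⁻¹ * ‖s • x - v‖ := by
  have : x - s⁻¹ • v = s⁻¹ • (s • x - v) := by
    rw [smul_sub, smul_smul, inv_mul_cancel₀ hs.ne', one_smul]
  rw [this, norm_smul, Real.norm_eq_abs, abs_of_pos (inv_pos.mpr hs)]

lemma div_scale {s : ℝ} (hs : 0 < s) (a b t : ℝ) :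
    a * (s ^ 3 * b) / (8 * Real.pi * (s⁻¹ * t)) = (s ^ 4 * a) * (b / (8 * Real.pi * t)) := by
  rcases eq_or_ne t 0 with rfl | ht
  · simp
  · have hπ := Real.pi_ne_zero
    field_simp

lemma inner_scale {σ : ℝ} (hσ : 0 < σ) (x : E3) :
    (∫ y : E3, gaussianDensity σ x * gaussianDensity σ y / (8 * Real.pi * ‖x - y‖))
    = Real.sqrt σ * (gaussianDensity σ x *
        ∫ v : E3, gaussianDensity 1 v / (8 * Real.pi * ‖Real.sqrt σ • x - v‖)) := by
  set s := Real.sqrt σ with hs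
  have hs0 : 0 < s := Real.sqrt_pos.mpr hσ
  have key := Measure.integral_comp_inv_smul_of_nonneg (volume : Measure E3)
    (fun y => gaussianDensity σ x * gaussianDensity σ y / (8 * Real.pi * ‖x - y‖)) hs0.le
  rw [finrank_E3] at key
  have hpt : ∀ v : E3,
      gaussianDensity σ x * gaussianDensity σ (s⁻¹ • v) / (8 * Real.pi * ‖x - s⁻¹ • v‖)
      = (s ^ 4 * gaussianDensity σ x) * (gaussianDensity 1 v / (8 * Real.pi * ‖s • x - v‖)) := by
    intro v
    rw [gd_scale hσ, norm_shift hs0, div_scale hs0]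
  simp only [hpt] at key
  rw [integral_const_mul] at key
  have h4 : (s:ℝ) ^ 4 * (gaussianDensity σ x * ∫ v : E3, gaussianDensity 1 v / (8 * Real.pi * ‖s • x - v‖))
      = s ^ 3 • ∫ y : E3, gaussianDensity σ x * gaussianDensity σ y / (8 * Real.pi * ‖x - y‖) := by
    rw [← key]; ring
  rw [smul_eq_mul] at h4
  have hs3 : (s:ℝ) ^ 3 ≠ 0 := by positivity
  calc (∫ y : E3, gaussianDensity σ x * gaussianDensity σ y / (8 * Real.pi * ‖x - y‖))
      = (s ^ 3)⁻¹ * (s ^ 3 * ∫ y : E3, gaussianDensity σ x * gaussianDensity σ y / (8 * Real.pi * ‖x - y‖)) := by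
        rw [← mul_assoc, inv_mul_cancel₀ hs3, one_mul]
    _ = (s ^ 3)⁻¹ * (s ^ 4 * (gaussianDensity σ x * ∫ v : E3, gaussianDensity 1 v / (8 * Real.pi * ‖s • x - v‖))) := by
        rw [← h4]
    _ = s * (gaussianDensity σ x * ∫ v : E3, gaussianDensity 1 v / (8 * Real.pi * ‖s • x - v‖)) := by
        field_simp

lemma outer_scale {σ : ℝ} (hσ : 0 < σ) :
    (∫ x : E3, ∫ y : E3, gaussianDensity σ x * gaussianDensity σ y / (8 * Real.pi * ‖x - y‖))
    = Real.sqrt σ * ∫ u : E3, ∫ v : E3,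
        gaussianDensity 1 u * gaussianDensity 1 v / (8 * Real.pi * ‖u - v‖) := by
  set s := Real.sqrt σ with hsdef
  have hs0 : 0 < s := Real.sqrt_pos.mpr hσ
  have hs3 : (s:ℝ) ^ 3 ≠ 0 := by positivity
  have step1 : (∫ x : E3, ∫ y : E3, gaussianDensity σ x * gaussianDensity σ y / (8 * Real.pi * ‖x - y‖))
      = ∫ x : E3, s * (gaussianDensity σ x *
          ∫ v : E3, gaussianDensity 1 v / (8 * Real.pi * ‖s • x - v‖)) := by
    congr 1
    funext x
    exact inner_scale hσ x
  rw [step1]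
  have key := Measure.integral_comp_inv_smul_of_nonneg (volume : Measure E3)
    (fun x => s * (gaussianDensity σ x *
      ∫ v : E3, gaussianDensity 1 v / (8 * Real.pi * ‖s • x - v‖))) hs0.le
  rw [finrank_E3] at key
  have hpt : ∀ u : E3,
      s * (gaussianDensity σ (s⁻¹ • u) *
        ∫ v : E3, gaussianDensity 1 v / (8 * Real.pi * ‖s • s⁻¹ • u - v‖))
      = s ^ 4 * (gaussianDensity 1 u *
        ∫ v : E3, gaussianDensity 1 v / (8 * Real.pi * ‖u - v‖)) := by
    intro u
    have hu : s • s⁻¹ • u = u := by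
      rw [smul_smul, mul_inv_cancel₀ hs0.ne', one_smul]
    rw [hu, gd_scale hσ]
    ring
  simp only [hpt] at key
  rw [integral_const_mul] at key
  rw [smul_eq_mul] at key
  have inner_eq : ∀ u : E3,
      gaussianDensity 1 u * ∫ v : E3, gaussianDensity 1 v / (8 * Real.pi * ‖u - v‖)
      = ∫ v : E3, gaussianDensity 1 u * gaussianDensity 1 v / (8 * Real.pi * ‖u - v‖) := by
    intro u
    rw [← integral_const_mul]
    congr 1; funext v; ring
  calc (∫ x : E3, s * (gaussianDensity σ x *
          ∫ v : E3, gaussianDensity 1 v / (8 * Real.pi * ‖s • x - v‖)))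
      = (s ^ 3)⁻¹ * (s ^ 3 * ∫ x : E3, s * (gaussianDensity σ x *
          ∫ v : E3, gaussianDensity 1 v / (8 * Real.pi * ‖s • x - v‖))) := by
        rw [← mul_assoc, inv_mul_cancel₀ hs3, one_mul]
    _ = (s ^ 3)⁻¹ * (s ^ 4 * ∫ u : E3, gaussianDensity 1 u *
          ∫ v : E3, gaussianDensity 1 v / (8 * Real.pi * ‖u - v‖)) := by rw [← key]
    _ = s * ∫ u : E3, gaussianDensity 1 u *
          ∫ v : E3, gaussianDensity 1 v / (8 * Real.pi * ‖u - v‖) := by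
        field_simp
    _ = s * ∫ u : E3, ∫ v : E3,
          gaussianDensity 1 u * gaussianDensity 1 v / (8 * Real.pi * ‖u - v‖) := by
        congr 1
        congr 1
        funext u
        exact inner_eq u

end GaussianInstabilityAux

open GaussianInstabilityAux in
/-- the Gaussians have unit total mass for every `σ > 0`, while
their gravitational field energy tends to `-∞` as `σ → ∞`. -/
theorem gaussian_instability :
    (∀ σ : ℝ, 0 < σ → ∫ x : E3, gaussianDensity σ x = 1) ∧
    Filter.Tendsto gravEnergy Filter.atTop Filter.atBot := by
  constructor
  · intro σ hσ
    exact mass hσ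
  · set C : ℝ := ∫ u : E3, ∫ v : E3,
      gaussianDensity 1 u * gaussianDensity 1 v / (8 * Real.pi * ‖u - v‖) with hC
    have hCpos : 0 < C := C_pos
    have hsqrt : Filter.Tendsto Real.sqrt Filter.atTop Filter.atTop := by
      apply Filter.tendsto_atTop_atTop.2
      intro b
      refine ⟨b ^ 2, fun σ hσ => ?_⟩
      calc b ≤ |b| := le_abs_self b
        _ = Real.sqrt (b ^ 2) := (Real.sqrt_sq_eq_abs b).symm
        _ ≤ Real.sqrt σ := Real.sqrt_le_sqrt hσ
    have h1 : Filter.Tendsto (fun σ : ℝ => Real.sqrt σ * C) Filter.atTop Filter.atTop :=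
      hsqrt.atTop_mul_const hCpos
    have h2 : Filter.Tendsto (fun σ : ℝ => -(Real.sqrt σ * C)) Filter.atTop Filter.atBot :=
      Filter.tendsto_neg_atTop_atBot.comp h1
    refine h2.congr' ?_
    filter_upwards [Filter.eventually_gt_atTop (0:ℝ)] with σ hσ
    rw [gravEnergy, outer_scale hσ, ← hC]
end
end
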